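/- arXiv:1901.05732 — 3 statements merged into one kernel-verified Lean document; each statement's English description precedes it below -/
import Mathlib

section
/- If r = 2, then every combination C_{T,{i}} lies in the GF(2)-linear span of the linear combinations transmitted by the proposed interference-alignment scheme, for every T ⊆ {1,...,K} with |T| = t+1 and every demanded file index i ∈ {1,...,N}\F_d satisfying |∪_{k∈T}{d_k} ∪ {i}| ≥ 2; in particular every user can recover each such C_{T,{i}} from the broadcast. -/
open Finset

/-- The ambient GF(2)-vector space with basis indexed by sub-block labels `(S, V)`:
`S` is the block index (a set of files) and `V` the set of users caching the sub-block. -/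
abbrev Vec (N K : ℕ) := Finset (Fin N) × Finset (Fin K) → ZMod 2

/-- The basis vector corresponding to the sub-block `W_{S,V}`. -/
def subBlk (N K : ℕ) (S : Finset (Fin N)) (V : Finset (Fin K)) : Vec N K :=
  Pi.single (S, V) 1

/-- Number of distinct entries `N_e(d)` of a demand vector. -/
def numDistinct {N K : ℕ} (d : Fin K → Fin N) : ℕ := (Finset.univ.image d).card

/-- The demands `{d_{u_1},…,d_{u_j}}` of the first `j` leaders. -/
def leaderDems {N K : ℕ} (d : Fin K → Fin N) (u : ℕ → Fin K) (j : ℕ) : Finset (Fin N) :=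
  (Finset.Icc 1 j).image (fun i => d (u i))

/-- The group `G^j_{J,B}` of blocks: blocks `S` of size `r` intersecting the demands of `J`,
containing at most one of the first `j` leader demands (i.e. containing no 2-subset of
them), and with `S \ d(J) = B`. -/
def groupG {N K : ℕ} (d : Fin K → Fin N) (u : ℕ → Fin K) (r j : ℕ)
    (J : Finset (Fin K)) (B : Finset (Fin N)) : Finset (Finset (Fin N)) :=
  (Finset.powersetCard r (Finset.univ : Finset (Fin N))).filter (fun S =>
    (S ∩ J.image d).Nonempty ∧ (S ∩ leaderDems d u j).card ≤ 1 ∧ S \ J.image d = B)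

/-- The multicast term `⊕_{k∈J : d_k∈S} W_{S,J\{k}}` of a block `S` for the user set `J`. -/
def blkTerm {N K : ℕ} (d : Fin K → Fin N) (J : Finset (Fin K)) (S : Finset (Fin N)) : Vec N K :=
  ∑ k ∈ J.filter (fun k => d k ∈ S), subBlk N K S (J.erase k)

/-- The transmitted linear combination of the group `G^j_{J,B}` whose pilot block
(one of the first `n^j_{J,B}` blocks, demanded by the leader `u_j`) is `P`: the `p`-th
coordinate of the vector of linear combinations in the scheme, where `S_p = P`. -/
def comb {N K : ℕ} (d : Fin K → Fin N) (u : ℕ → Fin K) (r j : ℕ)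
    (J : Finset (Fin K)) (B : Finset (Fin N)) (P : Finset (Fin N)) : Vec N K :=
  blkTerm d J P +
    ∑ S ∈ (groupG d u r j J B).filter (fun S => d (u j) ∉ S ∧ (S ∩ P).card = r - 1),
      blkTerm d J S

/-- `Sum(G^j_{J,B})`: the XOR of all linear combinations transmitted for the group
`G^j_{J,B}` (one per block of the group demanded by the leader `u_j`). -/
def sumG {N K : ℕ} (d : Fin K → Fin N) (u : ℕ → Fin K) (r j : ℕ)
    (J : Finset (Fin K)) (B : Finset (Fin N)) : Vec N K :=
  ∑ P ∈ (groupG d u r j J B).filter (fun S => d (u j) ∈ S), comb d u r j J B P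

/-- The set of all linear combinations transmitted by the interference-alignment scheme
during steps `1,…,jmax`. -/
def transmitted {N K : ℕ} (d : Fin K → Fin N) (u : ℕ → Fin K) (r t jmax : ℕ) :
    Set (Vec N K) :=
  { v | ∃ j ∈ Finset.Icc 1 jmax, ∃ J : Finset (Fin K),
      J.card = t + 1 ∧ u j ∈ J ∧ (∀ i ∈ Finset.Icc 1 (j - 1), u i ∉ J) ∧
      ∃ B : Finset (Fin N), ∃ P ∈ groupG d u r j J B,
        d (u j) ∈ P ∧ v = comb d u r j J B P }

/-- The sub-blocks cached by user `k` under the MAN placement with parameter `t`. -/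
def cacheSet (N K r t : ℕ) (k : Fin K) : Set (Vec N K) :=
  { v | ∃ S : Finset (Fin N), ∃ V : Finset (Fin K),
      S.card = r ∧ V.card = t ∧ k ∈ V ∧ v = subBlk N K S V }

/-- A linear combination `c` contains no interference to a user demanding file `dk`,
relative to a set `Dec` of already known sub-blocks: every sub-block appearing in `c`
either belongs to the demanded file or is already known (hence cancellable). -/
def interfFree {N K : ℕ} (dk : Fin N) (Dec : Set (Vec N K)) (c : Vec N K) : Prop :=
  ∀ S V, c (S, V) ≠ 0 → dk ∈ S ∨ subBlk N K S V ∈ Dec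

/-- One round of direct decoding: add every sub-block lying in the span of the known
sub-blocks together with the interference-free transmitted combinations. -/
def ddStep {N K : ℕ} (dk : Fin N) (T : Set (Vec N K)) (Dec : Set (Vec N K)) :
    Set (Vec N K) :=
  Dec ∪ { v | (∃ S V, v = subBlk N K S V) ∧
    v ∈ Submodule.span (ZMod 2) (Dec ∪ { c ∈ T | interfFree dk Dec c }) }

/-- The set of sub-blocks that user `k` can obtain by direct decoding (treating
interference as noise) from its cache and the transmissions of steps `1,…,jmax`. -/
def directDec {N K : ℕ} (d : Fin K → Fin N) (u : ℕ → Fin K) (r t : ℕ)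
    (k : Fin K) (jmax : ℕ) : Set (Vec N K) :=
  ⋃ m : ℕ, (ddStep (d k) (transmitted d u r t jmax))^[m] (cacheSet N K r t k)

/-- The combination `C_{T,H}` from the interference-alignment analysis. -/
def Cth {N K : ℕ} (d : Fin K → Fin N) (r : ℕ) (T : Finset (Fin K)) (H : Finset (Fin N)) :
    Vec N K :=
  ∑ k1 ∈ T, ∑ S' ∈ (Finset.powersetCard r (T.image d ∪ H)).filter
      (fun S' => H ⊆ S' ∧ d k1 ∈ S'), subBlk N K S' (T.erase k1)

section StatementElevenHelpers

variable {N K : ℕ}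

lemma vec_add_self (v : Vec N K) : v + v = 0 := by
  funext p
  have h : ∀ x : ZMod 2, x + x = 0 := by decide
  exact h (v p)

lemma vec_eq_of_add_eq_zero {v w : Vec N K} (h : v + w = 0) : v = w := by
  calc v = v + (w + w) := by rw [vec_add_self, add_zero]
    _ = (v + w) + w := (add_assoc v w w).symm
    _ = w := by rw [h, zero_add]

/-- The auxiliary combination `Y(T,b)`. -/
def Yc (d : Fin K → Fin N) (T : Finset (Fin K)) (b : Fin N) : Vec N K :=
  ∑ a ∈ (T.image d).erase b, blkTerm d T {a, b}

lemma I2 (d : Fin K → Fin N) (T : Finset (Fin K)) :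
    ∑ c ∈ T.image d, Yc d T c = 0 := by
  unfold Yc
  rw [Finset.sum_sigma' (T.image d) (fun c => (T.image d).erase c)
      (fun c a => blkTerm d T {a, c})]
  refine Finset.sum_involution (fun p _ => ⟨p.2, p.1⟩) ?_ ?_ ?_ ?_
  · intro p hp
    have : ({p.1, p.2} : Finset (Fin N)) = {p.2, p.1} := pair_comm _ _
    show blkTerm d T {p.2, p.1} + blkTerm d T {p.1, p.2} = 0
    rw [this, vec_add_self]
  · intro p hp _
    rw [Finset.mem_sigma] at hp
    intro he
    exact (Finset.ne_of_mem_erase hp.2) (congrArg Sigma.fst he)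
  · intro p hp
    rw [Finset.mem_sigma] at hp ⊢
    obtain ⟨h1, h2⟩ := hp
    exact ⟨Finset.mem_of_mem_erase h2,
      Finset.mem_erase.2 ⟨fun he => (Finset.ne_of_mem_erase h2) he.symm, h1⟩⟩
  · intro p hp; rfl

lemma I1star (d : Fin K → Fin N) (A : Finset (Fin K)) :
    ∑ k ∈ A, Yc d (A.erase k) (d k) = 0 := by
  classical
  have key : ∑ p ∈ A.sigma (fun k => (((A.erase k).image d).erase (d k)).sigma
        (fun a => (A.erase k).filter (fun κ => d κ ∈ ({a, d k} : Finset (Fin N))))),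
      subBlk N K {p.2.1, d p.1} ((A.erase p.1).erase p.2.2) = 0 := by
    refine Finset.sum_involution
      (fun p _ => ⟨p.2.2, ⟨if d p.2.2 = d p.1 then p.2.1 else d p.1, p.1⟩⟩) ?_ ?_ ?_ ?_
    · intro p hp
      obtain ⟨k, a, κ⟩ := p
      simp only [Finset.mem_sigma, Finset.mem_filter, Finset.mem_erase, Finset.mem_image,
        Finset.mem_insert, Finset.mem_singleton] at hp
      obtain ⟨hkA, ⟨hane, hmem⟩, ⟨⟨hκk, hκA⟩, hdκ⟩⟩ := hp
      show subBlk N K {a, d k} ((A.erase k).erase κ) +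
        subBlk N K {(if d κ = d k then a else d k), d κ} ((A.erase κ).erase k) = 0
      have herase : (A.erase κ).erase k = (A.erase k).erase κ := Finset.erase_right_comm
      by_cases hh : d κ = d k
      · rw [if_pos hh, hh, herase, vec_add_self]
      · have h : d κ = a := hdκ.resolve_right hh
        rw [if_neg hh, h, pair_comm a (d k), herase, vec_add_self]
    · intro p hp _
      obtain ⟨k, a, κ⟩ := p
      simp only [Finset.mem_sigma, Finset.mem_filter, Finset.mem_erase] at hp
      intro he
      exact hp.2.2.1.1 (congrArg Sigma.fst he)
    · intro p hp
      obtain ⟨k, a, κ⟩ := p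
      simp only [Finset.mem_sigma, Finset.mem_filter, Finset.mem_erase, Finset.mem_image,
        Finset.mem_insert, Finset.mem_singleton] at hp ⊢
      obtain ⟨hkA, ⟨hane, m, ⟨hmk, hmA⟩, hma⟩, ⟨⟨hκk, hκA⟩, hdκ⟩⟩ := hp
      have hkκ : k ≠ κ := fun e => hκk e.symm
      by_cases hh : d κ = d k
      · rw [if_pos hh]
        refine ⟨hκA, ⟨⟨fun e => hane (e.trans hh), m, ⟨?_, hmA⟩, hma⟩,
          ⟨⟨hkκ, hkA⟩, Or.inr hh.symm⟩⟩⟩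
        intro e
        exact hane ((e ▸ hma : d κ = a).symm.trans hh)
      · have hda : d κ = a := hdκ.resolve_right hh
        rw [if_neg hh]
        exact ⟨hκA, ⟨⟨fun e => hh e.symm, k, ⟨hkκ, hkA⟩, rfl⟩,
          ⟨⟨hkκ, hkA⟩, Or.inl rfl⟩⟩⟩
    · intro p hp
      obtain ⟨k, a, κ⟩ := p
      simp only [Finset.mem_sigma, Finset.mem_filter, Finset.mem_erase, Finset.mem_image,
        Finset.mem_insert, Finset.mem_singleton] at hp
      obtain ⟨hkA, ⟨hane, hmem⟩, ⟨⟨hκk, hκA⟩, hdκ⟩⟩ := hp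
      show (⟨k, ⟨if d k = d κ then (if d κ = d k then a else d k) else d κ, κ⟩⟩ :
        (_ : Fin K) × (_ : Fin N) × Fin K) = ⟨k, ⟨a, κ⟩⟩
      by_cases hh : d κ = d k
      · rw [if_pos hh.symm, if_pos hh]
      · have hda : d κ = a := hdκ.resolve_right hh
        rw [if_neg (fun e => hh e.symm), hda]
  calc ∑ k ∈ A, Yc d (A.erase k) (d k)
      = ∑ p ∈ A.sigma (fun k => (((A.erase k).image d).erase (d k)).sigma
          (fun a => (A.erase k).filter (fun κ => d κ ∈ ({a, d k} : Finset (Fin N))))),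
        subBlk N K {p.2.1, d p.1} ((A.erase p.1).erase p.2.2) := by
        rw [Finset.sum_sigma]
        refine Finset.sum_congr rfl fun k _ => ?_
        rw [Finset.sum_sigma]
        rfl
    _ = 0 := key

lemma I1 (d : Fin K → Fin N) {T : Finset (Fin K)} {k0 : Fin K} (h : k0 ∉ T) :
    Yc d T (d k0) = ∑ k ∈ T, Yc d (insert k0 (T.erase k)) (d k) := by
  have h0 := I1star d (insert k0 T)
  rw [Finset.sum_insert h, Finset.erase_insert h] at h0
  rw [vec_eq_of_add_eq_zero h0]
  refine Finset.sum_congr rfl fun k hk => ?_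
  rw [Finset.erase_insert_of_ne (fun he => h (by rw [he]; exact hk))]

lemma CthEq (d : Fin K → Fin N) (T : Finset (Fin K)) (i : Fin N) :
    Cth d 2 T {i} = Yc d T i := by
  classical
  unfold Cth Yc blkTerm
  have hset : ∀ k1 : Fin K,
      (Finset.powersetCard 2 (T.image d ∪ {i})).filter
        (fun S' => ({i} : Finset (Fin N)) ⊆ S' ∧ d k1 ∈ S')
      = (((T.image d).erase i).filter
          (fun a => d k1 ∈ ({a, i} : Finset (Fin N)))).image
          (fun a => ({a, i} : Finset (Fin N))) := by
    intro k1
    ext S'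
    constructor
    · intro hS
      obtain ⟨hpow, hiS, hdk⟩ := Finset.mem_filter.1 hS
      obtain ⟨hsub, hcard⟩ := Finset.mem_powersetCard.1 hpow
      have hiS' : i ∈ S' := Finset.singleton_subset_iff.1 hiS
      rcases Finset.card_eq_two.1 hcard with ⟨x, y, hxy, rfl⟩
      rcases Finset.mem_insert.1 hiS' with h | h
      · subst h
        refine Finset.mem_image.2 ⟨y, Finset.mem_filter.2
          ⟨Finset.mem_erase.2 ⟨fun e => hxy e.symm, ?_⟩, ?_⟩, ?_⟩
        · rcases Finset.mem_union.1 (hsub (Finset.mem_insert_of_mem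
            (Finset.mem_singleton_self y))) with hy | hy
          · exact hy
          · exact absurd (Finset.mem_singleton.1 hy) (fun e => hxy e.symm)
        · exact Finset.pair_comm i y ▸ hdk
        · exact Finset.pair_comm y i
      · have h' := Finset.mem_singleton.1 h
        subst h'
        refine Finset.mem_image.2 ⟨x, Finset.mem_filter.2
          ⟨Finset.mem_erase.2 ⟨hxy, ?_⟩, hdk⟩, rfl⟩
        rcases Finset.mem_union.1 (hsub (Finset.mem_insert_self x _)) with hy | hy
        · exact hy
        · exact absurd (Finset.mem_singleton.1 hy) hxy
    · intro hS
      obtain ⟨a, ha, rfl⟩ := Finset.mem_image.1 hS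
      obtain ⟨ha1, hdk⟩ := Finset.mem_filter.1 ha
      obtain ⟨hai, haim⟩ := Finset.mem_erase.1 ha1
      refine Finset.mem_filter.2 ⟨Finset.mem_powersetCard.2 ⟨?_, Finset.card_pair hai⟩,
        Finset.singleton_subset_iff.2 (Finset.mem_insert_of_mem (Finset.mem_singleton_self i)),
        hdk⟩
      intro x hx
      rcases Finset.mem_insert.1 hx with rfl | hx
      · exact Finset.mem_union_left _ haim
      · exact Finset.mem_union_right _ hx
  calc ∑ k1 ∈ T, ∑ S' ∈ (Finset.powersetCard 2 (T.image d ∪ {i})).filter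
        (fun S' => ({i} : Finset (Fin N)) ⊆ S' ∧ d k1 ∈ S'), subBlk N K S' (T.erase k1)
      = ∑ k1 ∈ T, ∑ a ∈ ((T.image d).erase i).filter
          (fun a => d k1 ∈ ({a, i} : Finset (Fin N))), subBlk N K {a, i} (T.erase k1) := by
        refine Finset.sum_congr rfl fun k1 _ => ?_
        rw [hset k1]
        refine Finset.sum_image ?_
        intro x hx y hy he
        have hxi : x ≠ i := (Finset.mem_erase.1 (Finset.mem_filter.1 hx).1).1
        have : x ∈ ({y, i} : Finset (Fin N)) :=
          (show ({x, i} : Finset (Fin N)) = {y, i} from he) ▸ Finset.mem_insert_self x _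
        rcases Finset.mem_insert.1 this with h | h
        · exact h
        · exact absurd (Finset.mem_singleton.1 h) hxi
    _ = ∑ a ∈ (T.image d).erase i, ∑ k ∈ T.filter
          (fun k => d k ∈ ({a, i} : Finset (Fin N))), subBlk N K {a, i} (T.erase k) := by
        simp only [Finset.sum_filter]
        exact Finset.sum_comm

lemma pilot_mem (d : Fin K → Fin N) (u : ℕ → Fin K) {j : ℕ} {J : Finset (Fin K)} {b : Fin N}
    (hj : 1 ≤ j) (hujJ : u j ∈ J) (hb : b ∉ leaderDems d u j) :
    ({d (u j), b} : Finset (Fin N)) ∈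
      groupG d u 2 j J (({d (u j), b} : Finset (Fin N)) \ J.image d) := by
  have hdL : d (u j) ∈ leaderDems d u j :=
    Finset.mem_image.2 ⟨j, Finset.mem_Icc.2 ⟨hj, le_refl j⟩, rfl⟩
  have hne : d (u j) ≠ b := fun e => hb (e ▸ hdL)
  have hsub2 : ({d (u j), b} : Finset (Fin N)) ∩ leaderDems d u j ⊆ {d (u j)} := by
    intro x hx
    obtain ⟨hx1, hx2⟩ := Finset.mem_inter.1 hx
    rcases Finset.mem_insert.1 hx1 with rfl | hx1
    · exact Finset.mem_singleton_self _
    · rw [Finset.mem_singleton.1 hx1] at hx2; exact absurd hx2 hb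
  refine Finset.mem_filter.2 ⟨Finset.mem_powersetCard.2
    ⟨Finset.subset_univ _, Finset.card_pair hne⟩,
    ⟨d (u j), Finset.mem_inter.2 ⟨Finset.mem_insert_self _ _,
      Finset.mem_image.2 ⟨u j, hujJ, rfl⟩⟩⟩,
    le_trans (Finset.card_le_card hsub2) (by simp), rfl⟩

lemma YcComb (d : Fin K → Fin N) (u : ℕ → Fin K) {j : ℕ} {J : Finset (Fin K)} {b : Fin N}
    (hj : 1 ≤ j) (hujJ : u j ∈ J) (hb : b ∉ leaderDems d u j) :
    comb d u 2 j J (({d (u j), b} : Finset (Fin N)) \ J.image d)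
      ({d (u j), b} : Finset (Fin N)) = Yc d J b := by
  classical
  have hdL : d (u j) ∈ leaderDems d u j :=
    Finset.mem_image.2 ⟨j, Finset.mem_Icc.2 ⟨hj, le_refl j⟩, rfl⟩
  have hne : d (u j) ≠ b := fun e => hb (e ▸ hdL)
  have hdim : d (u j) ∈ J.image d := Finset.mem_image.2 ⟨u j, hujJ, rfl⟩
  have hset : (groupG d u 2 j J (({d (u j), b} : Finset (Fin N)) \ J.image d)).filter
      (fun S => d (u j) ∉ S ∧ (S ∩ ({d (u j), b} : Finset (Fin N))).card = 2 - 1)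
    = ((((J.image d).erase b).erase (d (u j))).image (fun a => ({a, b} : Finset (Fin N)))) := by
    ext S
    constructor
    · intro hS
      obtain ⟨hg, hnotin, hcap⟩ := Finset.mem_filter.1 hS
      obtain ⟨hpow, hA, hB, hC⟩ := Finset.mem_filter.1 hg
      obtain ⟨hsub, hcard⟩ := Finset.mem_powersetCard.1 hpow
      have hbS : b ∈ S := by
        have hpos : (S ∩ ({d (u j), b} : Finset (Fin N))).Nonempty := by
          rw [← Finset.card_pos, hcap]; norm_num
        obtain ⟨x, hx⟩ := hpos
        obtain ⟨hx1, hx2⟩ := Finset.mem_inter.1 hx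
        rcases Finset.mem_insert.1 hx2 with rfl | hx2
        · exact absurd hx1 hnotin
        · rw [← Finset.mem_singleton.1 hx2]; exact hx1
      have haim : ∀ a ∈ S, a ≠ b → a ∈ J.image d := by
        intro a haS hab
        by_contra hnot
        have : a ∈ ({d (u j), b} : Finset (Fin N)) \ J.image d := by
          rw [← hC]; exact Finset.mem_sdiff.2 ⟨haS, hnot⟩
        rcases Finset.mem_insert.1 (Finset.mem_sdiff.1 this).1 with rfl | h
        · exact hnotin haS
        · exact hab (Finset.mem_singleton.1 h)
      rcases Finset.card_eq_two.1 hcard with ⟨x, y, hxy, rfl⟩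
      rcases Finset.mem_insert.1 hbS with h | h
      · subst h
        have hyne : y ≠ b := fun e => hxy e.symm
        refine Finset.mem_image.2 ⟨y, Finset.mem_erase.2 ⟨?_, Finset.mem_erase.2 ⟨hyne,
          haim y (Finset.mem_insert_of_mem (Finset.mem_singleton_self y)) hyne⟩⟩, ?_⟩
        · intro e; exact hnotin (e ▸ Finset.mem_insert_of_mem (Finset.mem_singleton_self y))
        · exact Finset.pair_comm y b
      · have h' := Finset.mem_singleton.1 h
        subst h'
        refine Finset.mem_image.2 ⟨x, Finset.mem_erase.2 ⟨?_, Finset.mem_erase.2 ⟨hxy,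
          haim x (Finset.mem_insert_self x _) hxy⟩⟩, rfl⟩
        intro e; exact hnotin (e ▸ Finset.mem_insert_self x _)
    · intro hS
      obtain ⟨a, ha, rfl⟩ := Finset.mem_image.1 hS
      obtain ⟨haduj, ha2⟩ := Finset.mem_erase.1 ha
      obtain ⟨hab, haim⟩ := Finset.mem_erase.1 ha2
      have hdujnot : d (u j) ∉ ({a, b} : Finset (Fin N)) := by
        intro h
        rcases Finset.mem_insert.1 h with h | h
        · exact haduj h.symm
        · exact hne (Finset.mem_singleton.1 h)
      have hldsub : ({a, b} : Finset (Fin N)) ∩ leaderDems d u j ⊆ {a} := by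
        intro x hx
        obtain ⟨hx1, hx2⟩ := Finset.mem_inter.1 hx
        rcases Finset.mem_insert.1 hx1 with rfl | hx1
        · exact Finset.mem_singleton_self _
        · rw [Finset.mem_singleton.1 hx1] at hx2; exact absurd hx2 hb
      have hdiff : ({a, b} : Finset (Fin N)) \ J.image d
          = ({d (u j), b} : Finset (Fin N)) \ J.image d := by
        ext x
        simp only [Finset.mem_sdiff, Finset.mem_insert, Finset.mem_singleton]
        constructor
        · rintro ⟨h1 | h1, h2⟩
          · subst h1; exact absurd haim h2
          · exact ⟨Or.inr h1, h2⟩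
        · rintro ⟨h1 | h1, h2⟩
          · subst h1; exact absurd hdim h2
          · exact ⟨Or.inr h1, h2⟩
      have hcap : ({a, b} : Finset (Fin N)) ∩ ({d (u j), b} : Finset (Fin N)) = {b} := by
        ext x
        simp only [Finset.mem_inter, Finset.mem_insert, Finset.mem_singleton]
        constructor
        · rintro ⟨h1 | h1, h2 | h2⟩
          · exact absurd (h1.symm.trans h2) haduj
          · exact h2
          · exact h1
          · exact h1
        · rintro rfl
          exact ⟨Or.inr rfl, Or.inr rfl⟩
      refine Finset.mem_filter.2 ⟨Finset.mem_filter.2 ⟨Finset.mem_powersetCard.2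
        ⟨Finset.subset_univ _, Finset.card_pair hab⟩,
        ⟨a, Finset.mem_inter.2 ⟨Finset.mem_insert_self _ _, haim⟩⟩,
        le_trans (Finset.card_le_card hldsub) (by simp), hdiff⟩, hdujnot, by rw [hcap]; simp⟩
  unfold comb
  rw [hset, Finset.sum_image ?inj]
  case inj =>
    intro x hx y hy he
    have hxb : x ≠ b := (Finset.mem_erase.1 (Finset.mem_erase.1 hx).2).1
    have : x ∈ ({y, b} : Finset (Fin N)) :=
      (show ({x, b} : Finset (Fin N)) = {y, b} from he) ▸ Finset.mem_insert_self x _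
    rcases Finset.mem_insert.1 this with h | h
    · exact h
    · exact absurd (Finset.mem_singleton.1 h) hxb
  have hdujmem : d (u j) ∈ (J.image d).erase b := Finset.mem_erase.2 ⟨hne, hdim⟩
  show blkTerm d J {d (u j), b} + ∑ a ∈ ((J.image d).erase b).erase (d (u j)),
      blkTerm d J {a, b} = Yc d J b
  unfold Yc
  rw [← Finset.add_sum_erase _ (fun a => blkTerm d J {a, b}) hdujmem]

lemma Yc_mem_transmitted (d : Fin K → Fin N) (u : ℕ → Fin K) {t jmax j : ℕ}
    {J : Finset (Fin K)} {b : Fin N} (hjm : j ∈ Finset.Icc 1 jmax) (hJc : J.card = t + 1)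
    (hujJ : u j ∈ J) (hmin : ∀ m ∈ Finset.Icc 1 (j - 1), u m ∉ J)
    (hb : b ∉ leaderDems d u j) :
    Yc d J b ∈ transmitted d u 2 t jmax := by
  have hj1 : 1 ≤ j := (Finset.mem_Icc.1 hjm).1
  exact ⟨j, hjm, J, hJc, hujJ, hmin, ({d (u j), b} : Finset (Fin N)) \ J.image d,
    {d (u j), b}, pilot_mem d u hj1 hujJ hb, Finset.mem_insert_self _ _,
    (YcComb d u hj1 hujJ hb).symm⟩


end StatementElevenHelpers

theorem statement11 (N K t : ℕ) (hN : 1 ≤ N) (hK : 1 ≤ K) (ht : t ≤ K) (hrN : 2 ≤ N)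
    (d : Fin K → Fin N) (u : ℕ → Fin K)
    (hLdistinct : ∀ i ∈ Finset.Icc 1 (numDistinct d), ∀ i' ∈ Finset.Icc 1 (numDistinct d),
      i ≠ i' → d (u i) ≠ d (u i'))
    (hLcover : ∀ k : Fin K, ∃ i ∈ Finset.Icc 1 (numDistinct d), d (u i) = d k)
    (T : Finset (Fin K)) (hT : T.card = t + 1)
    (i : Fin N) (hi : ∃ k : Fin K, d k = i)
    (hcard : 2 ≤ (T.image d ∪ {i}).card) :
    Cth d 2 T {i} ∈ Submodule.span (ZMod 2)
      (transmitted d u 2 t (min (N - 2 + 1) (min (K - t) (numDistinct d)))) := by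
  classical
  rw [CthEq]
  set Ne := numDistinct d with hNedef
  set jmax := min (N - 2 + 1) (min (K - t) Ne) with hjmaxdef
  set Sp := Submodule.span (ZMod 2) (transmitted d u 2 t jmax) with hSpdef
  have hNe1 : 1 ≤ Ne := by
    have hne : (Finset.univ : Finset (Fin K)).Nonempty := ⟨⟨0, hK⟩, Finset.mem_univ _⟩
    rw [hNedef]
    unfold numDistinct
    exact Finset.card_pos.2 (hne.image d)
  have hNeN : Ne ≤ N := by
    rw [hNedef]
    unfold numDistinct
    calc (Finset.univ.image d).card ≤ Fintype.card (Fin N) := Finset.card_le_univ _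
      _ = N := Fintype.card_fin N
  have htK : t + 1 ≤ K := by
    have h := Finset.card_le_univ T
    rw [hT] at h; simpa using h
  have hjmax1 : 1 ≤ jmax := by
    refine le_min (by omega) (le_min (by omega) hNe1)
  have hjmaxNe : jmax ≤ Ne := le_trans (min_le_right _ _) (min_le_right _ _)
  have hinj : ∀ m m', m ∈ Finset.Icc 1 Ne → m' ∈ Finset.Icc 1 Ne → u m = u m' → m = m' := by
    intro m m' hm hm' he
    by_contra hne
    exact hLdistinct m hm m' hm' hne (by rw [he])
  -- Lemma A: strong induction on the minimal leader step of T'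
  have LA : ∀ j, j ∈ Finset.Icc 1 jmax → ∀ T' : Finset (Fin K), T'.card = t + 1 →
      u j ∈ T' → (∀ m ∈ Finset.Icc 1 (j - 1), u m ∉ T') → ∀ b, Yc d T' b ∈ Sp := by
    intro j
    induction j using Nat.strong_induction_on with
    | _ j IH =>
      intro hj T' hT'c hujT' hminT' b
      have hj1 : 1 ≤ j := (Finset.mem_Icc.1 hj).1
      have hjm : j ≤ jmax := (Finset.mem_Icc.1 hj).2
      have claim2 : ∀ c : Fin N, (∃ m', m' ∈ Finset.Icc 1 (j - 1) ∧ d (u m') = c) →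
          Yc d T' c ∈ Sp := by
        rintro c ⟨m', hm', rfl⟩
        have hm'1 : 1 ≤ m' := (Finset.mem_Icc.1 hm').1
        have hm'j : m' ≤ j - 1 := (Finset.mem_Icc.1 hm').2
        have hk0 : u m' ∉ T' := hminT' m' hm'
        rw [I1 d hk0]
        refine Submodule.sum_mem _ fun k hk => ?_
        refine IH m' (by omega) (Finset.mem_Icc.2 ⟨hm'1, by omega⟩) _ ?_
          (Finset.mem_insert_self _ _) ?_ _
        · rw [Finset.card_insert_of_notMem (fun h => hk0 (Finset.mem_of_mem_erase h)),
            Finset.card_erase_of_mem hk, hT'c]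
          omega
        · intro m'' hm'' hmem
          have hm''1 : 1 ≤ m'' := (Finset.mem_Icc.1 hm'').1
          have hm''m : m'' ≤ m' - 1 := (Finset.mem_Icc.1 hm'').2
          rcases Finset.mem_insert.1 hmem with he | hmem'
          · have := hinj m'' m' (Finset.mem_Icc.2 ⟨hm''1, by omega⟩)
              (Finset.mem_Icc.2 ⟨hm'1, by omega⟩) he
            omega
          · exact hminT' m'' (Finset.mem_Icc.2 ⟨hm''1, by omega⟩)
              (Finset.mem_of_mem_erase hmem')
      by_cases hbL : b ∈ leaderDems d u j
      · obtain ⟨m, hm, hdm⟩ := Finset.mem_image.1 hbL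
        have hm1 : 1 ≤ m := (Finset.mem_Icc.1 hm).1
        have hmj : m ≤ j := (Finset.mem_Icc.1 hm).2
        by_cases hmj' : m = j
        · have hdj : d (u j) = b := by rw [← hmj']; exact hdm
          have hbim : b ∈ T'.image d := Finset.mem_image.2 ⟨u j, hujT', hdj⟩
          have h0 := I2 d T'
          rw [← Finset.add_sum_erase _ _ hbim] at h0
          rw [vec_eq_of_add_eq_zero h0]
          refine Submodule.sum_mem _ fun c hc => ?_
          obtain ⟨hcb, hcim⟩ := Finset.mem_erase.1 hc
          by_cases hcL : c ∈ leaderDems d u j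
          · obtain ⟨m', hm', hdm'⟩ := Finset.mem_image.1 hcL
            have hm'1 : 1 ≤ m' := (Finset.mem_Icc.1 hm').1
            have hm'j : m' ≤ j := (Finset.mem_Icc.1 hm').2
            have hm'ne : m' ≠ j := fun e => hcb (by rw [← hdm', e, hdj])
            exact claim2 c ⟨m', Finset.mem_Icc.2 ⟨hm'1, by omega⟩, hdm'⟩
          · exact Submodule.subset_span (Yc_mem_transmitted d u hj hT'c hujT' hminT' hcL)
        · exact claim2 b ⟨m, Finset.mem_Icc.2 ⟨hm1, by omega⟩, hdm⟩
      · exact Submodule.subset_span (Yc_mem_transmitted d u hj hT'c hujT' hminT' hbL)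
  -- Lemma B
  have LB : ∀ T' : Finset (Fin K), T'.card = t + 1 →
      (∀ m ∈ Finset.Icc 1 jmax, u m ∉ T') → ∀ m c, m ∈ Finset.Icc 1 jmax → d (u m) = c →
      Yc d T' c ∈ Sp := by
    intro T' hT'c hemp m c hm hc
    have hm1 : 1 ≤ m := (Finset.mem_Icc.1 hm).1
    have hmjm : m ≤ jmax := (Finset.mem_Icc.1 hm).2
    have hk0 : u m ∉ T' := hemp m hm
    rw [← hc, I1 d hk0]
    refine Submodule.sum_mem _ fun k hk => ?_
    refine LA m hm _ ?_ (Finset.mem_insert_self _ _) ?_ _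
    · rw [Finset.card_insert_of_notMem (fun h => hk0 (Finset.mem_of_mem_erase h)),
        Finset.card_erase_of_mem hk, hT'c]
      omega
    · intro m'' hm'' hmem
      have hm''1 : 1 ≤ m'' := (Finset.mem_Icc.1 hm'').1
      have hm''m : m'' ≤ m - 1 := (Finset.mem_Icc.1 hm'').2
      rcases Finset.mem_insert.1 hmem with he | hmem'
      · have := hinj m'' m (Finset.mem_Icc.2 ⟨hm''1, by omega⟩)
          (Finset.mem_Icc.2 ⟨hm1, by omega⟩) he
        omega
      · exact hemp m'' (Finset.mem_Icc.2 ⟨hm''1, by omega⟩) (Finset.mem_of_mem_erase hmem')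
  -- Final assembly
  by_cases hSj : ∃ j ∈ Finset.Icc 1 jmax, u j ∈ T
  · obtain ⟨j0, hj0, hu0⟩ := hSj
    have hne : ((Finset.Icc 1 jmax).filter (fun j => u j ∈ T)).Nonempty :=
      ⟨j0, Finset.mem_filter.2 ⟨hj0, hu0⟩⟩
    set jst := ((Finset.Icc 1 jmax).filter (fun j => u j ∈ T)).min' hne with hjstdef
    have hjstmem := Finset.min'_mem _ hne
    obtain ⟨hjstIcc, hjstT⟩ := Finset.mem_filter.1 hjstmem
    have hjst1 : 1 ≤ jst := (Finset.mem_Icc.1 hjstIcc).1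
    have hjstm : jst ≤ jmax := (Finset.mem_Icc.1 hjstIcc).2
    refine LA jst hjstIcc T hT hjstT ?_ i
    intro m hm humT
    have hm1 : 1 ≤ m := (Finset.mem_Icc.1 hm).1
    have hmj : m ≤ jst - 1 := (Finset.mem_Icc.1 hm).2
    have hlem : jst ≤ m := Finset.min'_le _ m
      (Finset.mem_filter.2 ⟨Finset.mem_Icc.2 ⟨hm1, by omega⟩, humT⟩)
    omega
  · push_neg at hSj
    obtain ⟨k0, hk0⟩ := hi
    obtain ⟨j0, hj0Icc, hdj0⟩ := hLcover k0
    have hj01 : 1 ≤ j0 := (Finset.mem_Icc.1 hj0Icc).1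
    have hj0Ne : j0 ≤ Ne := (Finset.mem_Icc.1 hj0Icc).2
    by_cases hj0m : j0 ≤ jmax
    · exact LB T hT hSj j0 i (Finset.mem_Icc.2 ⟨hj01, hj0m⟩) (hdj0.trans hk0)
    · -- the last-leader case
      have hdisj : Disjoint ((Finset.Icc 1 jmax).image u) T := by
        rw [Finset.disjoint_left]
        intro x hx hxT
        obtain ⟨m, hm, rfl⟩ := Finset.mem_image.1 hx
        exact hSj m hm hxT
      have hinjOnU : Set.InjOn u (Finset.Icc 1 jmax) := by
        intro x hx y hy he
        rw [Finset.coe_Icc, Set.mem_Icc] at hx hy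
        exact hinj x y (Finset.mem_Icc.2 ⟨hx.1, le_trans hx.2 hjmaxNe⟩)
          (Finset.mem_Icc.2 ⟨hy.1, le_trans hy.2 hjmaxNe⟩) he
      have hcardU : ((Finset.Icc 1 jmax).image u).card = jmax := by
        rw [Finset.card_image_of_injOn hinjOnU, Nat.card_Icc]
        omega
      have hK2 : jmax + (t + 1) ≤ K := by
        have h1 := Finset.card_le_univ (((Finset.Icc 1 jmax).image u) ∪ T)
        rw [Finset.card_union_of_disjoint hdisj, hcardU, hT, Fintype.card_fin] at h1
        exact h1
      have hmin1 : jmax ≤ N - 2 + 1 := min_le_left _ _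
      have hmin2 : jmax ≤ K - t := le_trans (min_le_right _ _) (min_le_left _ _)
      have hchoice : jmax = N - 2 + 1 ∨ jmax = K - t ∨ jmax = Ne := by
        rcases min_choice (N - 2 + 1) (min (K - t) Ne) with h | h
        · exact Or.inl h
        · rcases min_choice (K - t) Ne with h2 | h2
          · exact Or.inr (Or.inl (h.trans h2))
          · exact Or.inr (Or.inr (h.trans h2))
      have harith : jmax = N - 1 ∧ Ne = N ∧ j0 = N := by omega
      obtain ⟨hjmN, hNeNeq, hj0N⟩ := harith
      have hranki : d (u N) = i := by
        rw [hj0N] at hdj0; exact hdj0.trans hk0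
      have hsurj : ∀ c : Fin N, ∃ m ∈ Finset.Icc 1 N, d (u m) = c := by
        have hinjOn2 : Set.InjOn (fun m => d (u m)) (Finset.Icc 1 N) := by
          intro x hx y hy he
          rw [Finset.coe_Icc, Set.mem_Icc] at hx hy
          by_contra hne
          exact hLdistinct x (Finset.mem_Icc.2 ⟨hx.1, by omega⟩) y
            (Finset.mem_Icc.2 ⟨hy.1, by omega⟩) hne he
        have hcard2 : ((Finset.Icc 1 N).image (fun m => d (u m))).card = N := by
          rw [Finset.card_image_of_injOn hinjOn2, Nat.card_Icc]; omega
        have huniv := Finset.eq_univ_of_card _ (by rw [hcard2, Fintype.card_fin])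
        intro c
        have hc : c ∈ (Finset.Icc 1 N).image (fun m => d (u m)) :=
          huniv ▸ Finset.mem_univ c
        exact Finset.mem_image.1 hc
      have hC : ∀ c : Fin N, c ≠ i → ∀ T'' : Finset (Fin K), T''.card = t + 1 →
          (∀ m ∈ Finset.Icc 1 jmax, u m ∉ T'') → Yc d T'' c ∈ Sp := by
        intro c hci T'' hT''c hemp
        obtain ⟨m, hm, hdm⟩ := hsurj c
        have hm1 : 1 ≤ m := (Finset.mem_Icc.1 hm).1
        have hmN : m ≤ N := (Finset.mem_Icc.1 hm).2
        have hmN' : m ≠ N := fun e => hci (by rw [← hdm, e, hranki])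
        exact LB T'' hT''c hemp m c (Finset.mem_Icc.2 ⟨hm1, by omega⟩) hdm
      by_cases hiT : i ∈ T.image d
      · have h0 := I2 d T
        rw [← Finset.add_sum_erase _ _ hiT] at h0
        rw [vec_eq_of_add_eq_zero h0]
        refine Submodule.sum_mem _ fun c hc => ?_
        exact hC c (Finset.mem_erase.1 hc).1 T hT hSj
      · have hk0T : k0 ∉ T := fun h => hiT (Finset.mem_image.2 ⟨k0, h, hk0⟩)
        rw [← hk0, I1 d hk0T]
        refine Submodule.sum_mem _ fun k hk => ?_
        have hci : d k ≠ i := fun h => hiT (Finset.mem_image.2 ⟨k, hk, h⟩)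
        refine hC (d k) hci (insert k0 (T.erase k)) ?_ ?_
        · rw [Finset.card_insert_of_notMem (fun h => hk0T (Finset.mem_of_mem_erase h)),
            Finset.card_erase_of_mem hk, hT]
          omega
        · intro m hm hmem
          have hm1 : 1 ≤ m := (Finset.mem_Icc.1 hm).1
          have hmjm : m ≤ jmax := (Finset.mem_Icc.1 hm).2
          rcases Finset.mem_insert.1 hmem with he | hmem'
          · have hdm : d (u m) = i := by rw [he, hk0]
            exact hLdistinct m (Finset.mem_Icc.2 ⟨hm1, by omega⟩) N
              (Finset.mem_Icc.2 ⟨by omega, by omega⟩) (by omega)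
              (hdm.trans hranki.symm)
          · exact hSj m hm (Finset.mem_of_mem_erase hmem')
end

section
/- Let r = 2 and let u_1 be a fixed user (the first leader). For every T ⊆ {1,...,K} with |T| = t+1 and u_1 ∉ T, the identity C_{T,{d_{u_1}}} = ⊕_{k∈T} C_{(T∪{u_1})\{k}, {d_k}} holds; equivalently, in the formal XOR C_{T,{d_{u_1}}} ⊕ ⊕_{k∈T} C_{(T∪{u_1})\{k}, {d_k}}, every sub-block W_{S,V} appears an even number of times, so the sum is 0 in the GF(2)-vector space with basis indexed by the pairs (S,V). -/
/-!
Put `A = T ∪ {u₁}`. For `k ∈ A` the demands of `A \ {k}` together with `d k` are exactly `d(A)`,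
so `C_{A \ {k}, {d k}}` splits as `∑_{b ∈ A \ {k}} pairTerm A k b`, where `pairTerm A a b`
collects the blocks of `d(A)` containing both `d a` and `d b`, cached by `A \ {a, b}`. Since
`pairTerm A` is symmetric, summing over all `k ∈ A` counts every unordered pair twice, so
`∑_{k ∈ A} C_{A \ {k}, {d k}} = 0` over GF(2); the term `k = u₁` is `C_{T, {d u₁}}`, and the
remaining terms are the right-hand side.
-/

open Finset

theorem Finset.sum_sum_erase_eq_zero {ι M : Type*} [DecidableEq ι] [AddCommMonoid M]
    (A : Finset ι) {f : ι → ι → M} (hf : ∀ a b, a ≠ b → f a b + f b a = 0) :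
    ∑ a ∈ A, ∑ b ∈ A.erase a, f a b = 0 := by
  rw [← sum_finset_product' A.offDiag A (fun a => A.erase a) fun p => by
    simp only [mem_offDiag, mem_erase]; tauto]
  refine sum_involution (fun p _ => p.swap) (fun p hp => hf _ _ (mem_offDiag.1 hp).2.2)
    (fun p hp _ h => (mem_offDiag.1 hp).2.2 (congrArg Prod.fst h).symm)
    (fun p hp => ?_) (fun _ _ => rfl)
  obtain ⟨h1, h2, hne⟩ := mem_offDiag.1 hp
  exact mem_offDiag.2 ⟨h2, h1, hne.symm⟩

section PairDecomposition

variable {N K : ℕ} (d : Fin K → Fin N) (r : ℕ) (A : Finset (Fin K))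

def pairTerm (a b : Fin K) : Vec N K :=
  ∑ S ∈ (powersetCard r (A.image d)).filter (fun S => d a ∈ S ∧ d b ∈ S),
    subBlk N K S ((A.erase a).erase b)

theorem pairTerm_comm (a b : Fin K) : pairTerm d r A a b = pairTerm d r A b a := by
  simp only [pairTerm, erase_right_comm, and_comm]

theorem Cth_erase_eq_sum_pairTerm {k : Fin K} (hk : k ∈ A) :
    Cth d r (A.erase k) {d k} = ∑ b ∈ A.erase k, pairTerm d r A k b := by
  have hdem : (A.erase k).image d ∪ {d k} = A.image d := by
    rw [union_comm, ← insert_eq, ← image_insert, insert_erase hk]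
  simp only [Cth, pairTerm, hdem, singleton_subset_iff]

theorem sum_Cth_erase_eq_zero : ∑ k ∈ A, Cth d r (A.erase k) {d k} = 0 := by
  rw [sum_congr rfl fun k hk => Cth_erase_eq_sum_pairTerm d r A hk]
  exact A.sum_sum_erase_eq_zero fun a b _ => by
    rw [pairTerm_comm d r A b a, CharTwo.add_self_eq_zero]

end PairDecomposition

theorem statement12_general (N K : ℕ)
    (d : Fin K → Fin N) (u1 : Fin K)
    (T : Finset (Fin K)) (hu1 : u1 ∉ T) :
    Cth d 2 T {d u1} = ∑ k ∈ T, Cth d 2 ((insert u1 T).erase k) {d k} := by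
  have hzero := sum_Cth_erase_eq_zero d 2 (insert u1 T)
  rw [sum_insert hu1, erase_insert hu1] at hzero
  exact CharTwo.add_eq_zero.1 hzero

theorem statement12 (N K t : ℕ) (hN : 1 ≤ N) (hK : 1 ≤ K) (ht : t ≤ K - 1)
    (d : Fin K → Fin N) (u1 : Fin K)
    (T : Finset (Fin K)) (hT : T.card = t + 1) (hu1 : u1 ∉ T) :
    Cth d 2 T {d u1} = ∑ k ∈ T, Cth d 2 ((insert u1 T).erase k) {d k} :=
  statement12_general N K d u1 T hu1
end

section
/- Let r = 2 and j ≥ 2. Let u_1,...,u_j be the first j leaders and let T ⊆ {1,...,K} with |T| = t+1, T ∩ {u_1,...,u_{j−1}} = ∅, u_j ∈ T, and {d_{u_1},...,d_{u_{j−1}}} ∩ ∪_{k∈T}{d_k} ≠ ∅. Then C_{T,{d_{u_j}}} ⊕ Sum(G^j_{T,∅}) ⊕ ( ⊕_{i ∈ {d_{u_1},...,d_{u_{j−1}}} ∩ ∪_{k∈T}{d_k}} C_{T,{i}} ) = 0 in the GF(2)-vector space with basis indexed by the pairs (S,V). -/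
open Finset

section Aux

lemma vecAddSelf {N K : ℕ} (v : Vec N K) : v + v = 0 :=
  funext fun _ => CharTwo.add_self_eq_zero _

lemma dsum_zero {α M : Type*} [DecidableEq α] [AddCommMonoid M]
    (h2 : ∀ v : M, v + v = 0) (A : Finset α) (f : α → α → M)
    (hs : ∀ a b, f a b = f b a) :
    ∑ a ∈ A, ∑ b ∈ A.erase a, f a b = 0 := by
  have h1 : ∀ a, ∑ b ∈ A.erase a, f a b = ∑ b ∈ A, if b ≠ a then f a b else 0 := by
    intro a
    rw [← Finset.filter_ne' A a, Finset.sum_filter]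
  simp_rw [h1, ← Finset.sum_product']
  refine Finset.sum_involution (fun p _ => (p.2, p.1)) ?_ ?_ ?_ ?_
  · intro p hp
    by_cases h : p.2 = p.1
    · simp [h]
    · simp only [h, Ne, not_false_iff, if_true, Ne.symm h]
      rw [hs p.1 p.2]; exact h2 _
  · intro p hp hne h
    apply hne
    have : p.2 = p.1 := congrArg Prod.fst h
    simp [this]
  · intro p hp
    simp only [Finset.mem_product] at hp ⊢
    exact ⟨hp.2, hp.1⟩
  · intro p hp; rfl

lemma pair_cases {α : Type*} [DecidableEq α] {S : Finset α} (h2 : S.card = 2) {h : α}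
    (hh : h ∈ S) : ∃ x, x ≠ h ∧ S = {h, x} := by
  obtain ⟨a, b, hab, rfl⟩ := Finset.card_eq_two.mp h2
  rcases Finset.mem_insert.mp hh with rfl | hb
  · exact ⟨b, Ne.symm hab, rfl⟩
  · rw [Finset.mem_singleton] at hb
    subst hb
    exact ⟨a, hab, Finset.pair_comm a h⟩

lemma pairs_filter_eq {α : Type*} [DecidableEq α] {W : Finset α} {h : α} (hhW : h ∈ W) :
    (Finset.powersetCard 2 W).filter (fun S => {h} ⊆ S)
      = (W.erase h).image (fun x => {h, x}) := by
  ext S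
  simp only [Finset.mem_filter, Finset.mem_powersetCard, Finset.mem_image,
    Finset.singleton_subset_iff, Finset.mem_erase]
  constructor
  · rintro ⟨⟨hsub, hcard⟩, hh⟩
    obtain ⟨x, hxh, rfl⟩ := pair_cases hcard hh
    refine ⟨x, ⟨hxh, hsub (by simp)⟩, rfl⟩
  · rintro ⟨x, ⟨hxh, hxW⟩, rfl⟩
    refine ⟨⟨?_, Finset.card_pair (Ne.symm hxh)⟩, by simp⟩
    intro y hy
    rcases Finset.mem_insert.mp hy with rfl | hy
    · exact hhW
    · rw [Finset.mem_singleton] at hy; subst hy; exact hxW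

lemma pair_right_inj {α : Type*} [DecidableEq α] {h : α} {s : Finset α}
    (hs : ∀ b ∈ s, b ≠ h) :
    ∀ x ∈ s, ∀ y ∈ s, ({h, x} : Finset α) = {h, y} → x = y := by
  intro x hx y hy hEq
  have hx' : x ∈ ({h, y} : Finset α) := hEq ▸ (by simp : x ∈ ({h, x} : Finset α))
  rcases Finset.mem_insert.mp hx' with rfl | hx'
  · exact absurd rfl (hs x hx)
  · exact Finset.mem_singleton.mp hx'

lemma Cth_pair {N K : ℕ} (d : Fin K → Fin N) (T : Finset (Fin K)) (h : Fin N) :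
    Cth d 2 T {h} = ∑ x ∈ (T.image d).erase h, blkTerm d T {h, x} := by
  have herase : (T.image d ∪ {h}).erase h = (T.image d).erase h := by
    ext y; simp only [Finset.mem_erase, Finset.mem_union, Finset.mem_singleton]; tauto
  calc Cth d 2 T {h}
      = ∑ k1 ∈ T, ∑ S' ∈ ((Finset.powersetCard 2 (T.image d ∪ {h})).filter
          (fun S' => {h} ⊆ S')), if d k1 ∈ S' then subBlk N K S' (T.erase k1) else 0 := by
        unfold Cth
        refine Finset.sum_congr rfl fun k1 _ => ?_
        rw [← Finset.sum_filter, Finset.filter_filter]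
    _ = ∑ S' ∈ ((Finset.powersetCard 2 (T.image d ∪ {h})).filter (fun S' => {h} ⊆ S')),
          ∑ k1 ∈ T, if d k1 ∈ S' then subBlk N K S' (T.erase k1) else 0 := Finset.sum_comm
    _ = ∑ S' ∈ ((Finset.powersetCard 2 (T.image d ∪ {h})).filter (fun S' => {h} ⊆ S')),
          blkTerm d T S' := by
        refine Finset.sum_congr rfl fun S' _ => ?_
        rw [blkTerm, Finset.sum_filter]
    _ = ∑ x ∈ (T.image d).erase h, blkTerm d T {h, x} := by
        rw [pairs_filter_eq (by simp : h ∈ T.image d ∪ {h}), herase,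
          Finset.sum_image (pair_right_inj (fun b hb => (Finset.mem_erase.mp hb).1))]

lemma groupG_mem {N K : ℕ} (d : Fin K → Fin N) (u : ℕ → Fin K) (j : ℕ)
    (T : Finset (Fin K)) (S : Finset (Fin N)) :
    S ∈ groupG d u 2 j T ∅ ↔
      S.card = 2 ∧ S ⊆ T.image d ∧ (S ∩ leaderDems d u j).card ≤ 1 := by
  simp only [groupG, Finset.mem_filter, Finset.mem_powersetCard,
    Finset.sdiff_eq_empty_iff_subset]
  constructor
  · rintro ⟨⟨-, hcard⟩, -, hL, hsub⟩
    exact ⟨hcard, hsub, hL⟩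
  · rintro ⟨hcard, hsub, hL⟩
    refine ⟨⟨Finset.subset_univ _, hcard⟩, ?_, hL, hsub⟩
    rw [Finset.inter_eq_left.mpr hsub]
    exact Finset.card_pos.mp (by omega)

lemma pilots_eq {N K : ℕ} (d : Fin K → Fin N) (u : ℕ → Fin K) (j : ℕ)
    (T : Finset (Fin K)) (L : Finset (Fin N))
    (hLj : leaderDems d u j = insert (d (u j)) L)
    (hP0D : d (u j) ∈ T.image d) :
    (groupG d u 2 j T ∅).filter (fun S => d (u j) ∈ S)
      = ((((T.image d).erase (d (u j)))) \ (L ∩ T.image d)).image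
          (fun x => {d (u j), x}) := by
  set P0 := d (u j) with hP0def
  set D := T.image d with hDdef
  ext S
  rw [Finset.mem_filter, groupG_mem, Finset.mem_image]
  constructor
  · rintro ⟨⟨hcard, hsub, hL⟩, hP0S⟩
    obtain ⟨x, hxP0, rfl⟩ := pair_cases hcard hP0S
    have hxL : x ∉ leaderDems d u j := by
      intro hx
      have h2 : ({P0, x} : Finset (Fin N)) ⊆ {P0, x} ∩ leaderDems d u j := by
        intro y hy
        rcases Finset.mem_insert.mp hy with rfl | hy
        · exact Finset.mem_inter.mpr ⟨by simp, by rw [hLj]; simp⟩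
        · rw [Finset.mem_singleton] at hy; subst hy
          exact Finset.mem_inter.mpr ⟨by simp, hx⟩
      have := Finset.card_le_card h2
      rw [Finset.card_pair (Ne.symm hxP0)] at this
      omega
    refine ⟨x, Finset.mem_sdiff.mpr ⟨Finset.mem_erase.mpr ⟨hxP0, hsub (by simp)⟩, ?_⟩, rfl⟩
    rw [Finset.mem_inter]
    rintro ⟨hxL', -⟩
    exact hxL (by rw [hLj]; exact Finset.mem_insert_of_mem hxL')
  · rintro ⟨x, hx, rfl⟩
    rw [Finset.mem_sdiff, Finset.mem_erase, Finset.mem_inter] at hx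
    obtain ⟨⟨hxP0, hxD⟩, hxA⟩ := hx
    have hxL : x ∉ L := fun h => hxA ⟨h, hxD⟩
    refine ⟨⟨Finset.card_pair (Ne.symm hxP0), ?_, ?_⟩, by simp⟩
    · intro y hy
      rcases Finset.mem_insert.mp hy with rfl | hy
      · exact hP0D
      · rw [Finset.mem_singleton] at hy; subst hy; exact hxD
    · have : ({P0, x} : Finset (Fin N)) ∩ leaderDems d u j = {P0} := by
        rw [hLj]
        ext y
        simp only [Finset.mem_inter, Finset.mem_insert, Finset.mem_singleton]
        constructor
        · rintro ⟨rfl | rfl, h2⟩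
          · rfl
          · rcases h2 with h2 | h2
            · exact absurd h2 hxP0
            · exact absurd h2 hxL
        · rintro rfl; exact ⟨Or.inl rfl, Or.inl rfl⟩
      rw [this, Finset.card_singleton]

lemma Fx_eq {N K : ℕ} (d : Fin K → Fin N) (u : ℕ → Fin K) (j : ℕ)
    (T : Finset (Fin K)) (L : Finset (Fin N))
    (hLj : leaderDems d u j = insert (d (u j)) L)
    (x : Fin N) (hxD : x ∈ T.image d) (hxP0 : x ≠ d (u j)) (hxL : x ∉ L) :
    (groupG d u 2 j T ∅).filter
        (fun S => d (u j) ∉ S ∧ (S ∩ ({d (u j), x} : Finset (Fin N))).card = 2 - 1)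
      = (((T.image d).erase (d (u j))).erase x).image (fun b => {x, b}) := by
  set P0 := d (u j) with hP0def
  have hxLj : x ∉ leaderDems d u j := by
    rw [hLj, Finset.mem_insert]
    rintro (h | h)
    · exact hxP0 h
    · exact hxL h
  ext S
  rw [Finset.mem_filter, groupG_mem, Finset.mem_image]
  constructor
  · rintro ⟨⟨hcard, hsub, hL⟩, hP0S, hinter⟩
    have hxS : x ∈ S := by
      have hne : (S ∩ ({P0, x} : Finset (Fin N))).Nonempty :=
        Finset.card_pos.mp (by omega)
      obtain ⟨y, hy⟩ := hne
      rw [Finset.mem_inter, Finset.mem_insert, Finset.mem_singleton] at hy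
      obtain ⟨hyS, rfl | rfl⟩ := hy
      · exact absurd hyS hP0S
      · exact hyS
    obtain ⟨b, hbx, rfl⟩ := pair_cases hcard hxS
    refine ⟨b, ?_, rfl⟩
    rw [Finset.mem_erase, Finset.mem_erase]
    refine ⟨hbx, fun h => hP0S (by rw [h]; simp), hsub (by simp)⟩
  · rintro ⟨b, hb, rfl⟩
    rw [Finset.mem_erase, Finset.mem_erase] at hb
    obtain ⟨hbx, hbP0, hbD⟩ := hb
    have hP0S : P0 ∉ ({x, b} : Finset (Fin N)) := by
      rw [Finset.mem_insert, Finset.mem_singleton]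
      rintro (h | h)
      · exact hxP0 h.symm
      · exact hbP0 h.symm
    refine ⟨⟨Finset.card_pair (Ne.symm hbx), ?_, ?_⟩, hP0S, ?_⟩
    · intro y hy
      rcases Finset.mem_insert.mp hy with rfl | hy
      · exact hxD
      · rw [Finset.mem_singleton] at hy; subst hy; exact hbD
    · calc (({x, b} : Finset (Fin N)) ∩ leaderDems d u j).card
          ≤ ({b} : Finset (Fin N)).card := by
            apply Finset.card_le_card
            intro y hy
            rw [Finset.mem_inter, Finset.mem_insert, Finset.mem_singleton] at hy
            obtain ⟨rfl | rfl, hy2⟩ := hy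
            · exact absurd hy2 hxLj
            · simp
        _ = 1 := Finset.card_singleton b
    · have : ({x, b} : Finset (Fin N)) ∩ ({P0, x} : Finset (Fin N)) = {x} := by
        ext y
        simp only [Finset.mem_inter, Finset.mem_insert, Finset.mem_singleton]
        constructor
        · rintro ⟨rfl | rfl, h2⟩
          · rfl
          · rcases h2 with h2 | h2
            · exact absurd h2 hbP0
            · exact absurd h2 hbx
        · rintro rfl; exact ⟨Or.inl rfl, Or.inr rfl⟩
      rw [this, Finset.card_singleton]

end Aux

theorem statement14 (N K t : ℕ) (hN : 1 ≤ N) (hK : 1 ≤ K) (ht : t + 1 ≤ K)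
    (d : Fin K → Fin N) (u : ℕ → Fin K) (j : ℕ) (hj2 : 2 ≤ j) (hjNe : j ≤ numDistinct d)
    (hLdistinct : ∀ i ∈ Finset.Icc 1 (numDistinct d), ∀ i' ∈ Finset.Icc 1 (numDistinct d),
      i ≠ i' → d (u i) ≠ d (u i'))
    (hLcover : ∀ k : Fin K, ∃ i ∈ Finset.Icc 1 (numDistinct d), d (u i) = d k)
    (T : Finset (Fin K)) (hT : T.card = t + 1)
    (hTav : ∀ i ∈ Finset.Icc 1 (j - 1), u i ∉ T) (huj : u j ∈ T)
    (hint : ((Finset.Icc 1 (j - 1)).image (fun i => d (u i)) ∩ T.image d).Nonempty) :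
    Cth d 2 T {d (u j)} + sumG d u 2 j T ∅ +
      ∑ i ∈ (Finset.Icc 1 (j - 1)).image (fun i => d (u i)) ∩ T.image d, Cth d 2 T {i}
      = 0 := by
  obtain ⟨j', rfl⟩ : ∃ j'', j = j'' + 1 := ⟨j - 1, by omega⟩
  simp only [Nat.add_sub_cancel] at hTav hint ⊢
  -- abbreviation facts
  have hP0D : d (u (j' + 1)) ∈ T.image d := Finset.mem_image_of_mem d huj
  have hP0L : d (u (j' + 1)) ∉ (Finset.Icc 1 j').image (fun i => d (u i)) := by
    rw [Finset.mem_image]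
    rintro ⟨i, hi, hEq⟩
    rw [Finset.mem_Icc] at hi
    refine hLdistinct i ?_ (j' + 1) ?_ (by omega) hEq
    · rw [Finset.mem_Icc]; omega
    · rw [Finset.mem_Icc]; omega
  have hLjins : leaderDems d u (j' + 1)
      = insert (d (u (j' + 1))) ((Finset.Icc 1 j').image (fun i => d (u i))) := by
    unfold leaderDems
    rw [show Finset.Icc 1 (j' + 1) = insert (j' + 1) (Finset.Icc 1 j') by
      ext i; simp only [Finset.mem_Icc, Finset.mem_insert]; omega, Finset.image_insert]
  set P0 : Fin N := d (u (j' + 1)) with hP0def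
  set L : Finset (Fin N) := (Finset.Icc 1 j').image (fun i => d (u i)) with hLdef
  set D : Finset (Fin N) := T.image d with hDdef
  set A : Finset (Fin N) := L ∩ D with hAdef
  set E : Finset (Fin N) := (D.erase P0) \ A with hEdef
  have hAsub : A ⊆ D.erase P0 := by
    intro a ha
    rw [hAdef, Finset.mem_inter] at ha
    exact Finset.mem_erase.mpr ⟨fun h => hP0L (h ▸ ha.1), ha.2⟩
  have hEA : E ∪ A = D.erase P0 := Finset.sdiff_union_of_subset hAsub
  have hdisjEA : Disjoint E A := Finset.sdiff_disjoint
  have hP0A : P0 ∉ A := fun h => hP0L (Finset.mem_inter.mp h).1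
  have hP0E : P0 ∉ E := fun h =>
    absurd rfl (Finset.mem_erase.mp (Finset.mem_sdiff.mp h).1).1
  -- rewrite Cth sums
  simp only [Cth_pair]
  -- rewrite sumG
  have hEmem : ∀ x ∈ E, x ∈ D ∧ x ≠ P0 ∧ x ∉ L := by
    intro x hx
    rw [hEdef, Finset.mem_sdiff, Finset.mem_erase] at hx
    exact ⟨hx.1.2, hx.1.1, fun h => hx.2 (Finset.mem_inter.mpr ⟨h, hx.1.2⟩)⟩
  have hsumG : sumG d u 2 (j' + 1) T ∅
      = ∑ x ∈ E, (blkTerm d T {P0, x}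
          + ∑ b ∈ (D.erase P0).erase x, blkTerm d T {x, b}) := by
    rw [sumG, pilots_eq d u (j' + 1) T L hLjins hP0D]
    rw [Finset.sum_image (pair_right_inj (fun b hb => (hEmem b hb).2.1))]
    refine Finset.sum_congr rfl fun x hx => ?_
    obtain ⟨hxD, hxP0, hxL⟩ := hEmem x hx
    rw [comb, Fx_eq d u (j' + 1) T L hLjins x hxD hxP0 hxL]
    rw [Finset.sum_image (pair_right_inj
      (fun b hb => (Finset.mem_erase.mp hb).1))]
  rw [hsumG]
  -- decompose the three top-level sums
  have hT1 : ∑ x ∈ D.erase P0, blkTerm d T {P0, x}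
      = ∑ x ∈ E, blkTerm d T {P0, x} + ∑ a ∈ A, blkTerm d T {P0, a} := by
    rw [← hEA, Finset.sum_union hdisjEA]
  have hT2 : ∑ x ∈ E, (blkTerm d T {P0, x}
        + ∑ b ∈ (D.erase P0).erase x, blkTerm d T {x, b})
      = ∑ x ∈ E, blkTerm d T {P0, x}
        + (∑ x ∈ E, ∑ b ∈ E.erase x, blkTerm d T {x, b}
           + ∑ x ∈ E, ∑ a ∈ A, blkTerm d T {x, a}) := by
    have inner : ∀ x ∈ E, ∑ b ∈ (D.erase P0).erase x, blkTerm d T {x, b}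
        = ∑ b ∈ E.erase x, blkTerm d T {x, b} + ∑ a ∈ A, blkTerm d T {x, a} := by
      intro x hx
      have hxA : x ∉ A := (Finset.mem_sdiff.mp hx).2
      have hsplit : (D.erase P0).erase x = E.erase x ∪ A := by
        rw [← hEA, Finset.erase_union_distrib, Finset.erase_eq_of_notMem hxA]
      rw [hsplit, Finset.sum_union
        (Finset.disjoint_of_subset_left (Finset.erase_subset x E) hdisjEA)]
    calc ∑ x ∈ E, (blkTerm d T {P0, x}
            + ∑ b ∈ (D.erase P0).erase x, blkTerm d T {x, b})
        = ∑ x ∈ E, (blkTerm d T {P0, x}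
            + (∑ b ∈ E.erase x, blkTerm d T {x, b}
               + ∑ a ∈ A, blkTerm d T {x, a})) :=
          Finset.sum_congr rfl (fun x hx => by rw [inner x hx])
      _ = _ := by rw [Finset.sum_add_distrib, Finset.sum_add_distrib]
  have hT3 : ∑ a ∈ A, ∑ x ∈ D.erase a, blkTerm d T {a, x}
      = ∑ a ∈ A, blkTerm d T {a, P0}
        + (∑ a ∈ A, ∑ x ∈ E, blkTerm d T {a, x}
           + ∑ a ∈ A, ∑ x ∈ A.erase a, blkTerm d T {a, x}) := by
    rw [← Finset.sum_add_distrib, ← Finset.sum_add_distrib]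
    refine Finset.sum_congr rfl fun a ha => ?_
    have haP0 : a ≠ P0 := (Finset.mem_erase.mp (hAsub ha)).1
    have haE : a ∉ E := fun h => (Finset.disjoint_left.mp hdisjEA h) ha
    have hDins : D = insert P0 (E ∪ A) := by
      rw [hEA]; exact (Finset.insert_erase hP0D).symm
    have hDera : D.erase a = insert P0 (E ∪ A.erase a) := by
      rw [hDins, Finset.erase_insert_of_ne (Ne.symm haP0),
        Finset.erase_union_distrib, Finset.erase_eq_of_notMem haE]
    have hP0nm : P0 ∉ E ∪ A.erase a := by
      rw [Finset.mem_union]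
      rintro (h | h)
      · exact hP0E h
      · exact hP0A (Finset.mem_of_mem_erase h)
    rw [hDera, Finset.sum_insert hP0nm, Finset.sum_union
      (Finset.disjoint_of_subset_right (Finset.erase_subset a A) hdisjEA)]
  rw [hT2, hT3]
  -- identify and cancel terms
  have hZ1 : ∑ x ∈ E, ∑ b ∈ E.erase x, blkTerm d T {x, b} = 0 :=
    dsum_zero vecAddSelf E (fun a b => blkTerm d T {a, b})
      (fun a b => by show blkTerm d T {a, b} = blkTerm d T {b, a}; rw [Finset.pair_comm])
  have hZ2 : ∑ a ∈ A, ∑ x ∈ A.erase a, blkTerm d T {a, x} = 0 :=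
    dsum_zero vecAddSelf A (fun a b => blkTerm d T {a, b})
      (fun a b => by show blkTerm d T {a, b} = blkTerm d T {b, a}; rw [Finset.pair_comm])
  have hSA : ∑ a ∈ A, blkTerm d T {a, P0} = ∑ a ∈ A, blkTerm d T {P0, a} :=
    Finset.sum_congr rfl fun a _ => by rw [Finset.pair_comm]
  have hC : ∑ a ∈ A, ∑ x ∈ E, blkTerm d T {a, x}
      = ∑ x ∈ E, ∑ a ∈ A, blkTerm d T {x, a} := by
    rw [Finset.sum_comm]
    exact Finset.sum_congr rfl fun x _ => Finset.sum_congr rfl fun a _ => by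
      rw [Finset.pair_comm]
  rw [hZ1, hZ2, hSA, hC, hT1]
  abel_nf
  simp only [show ∀ v : Vec N K, (2 : ℤ) • v = 0 from fun v => by
    rw [two_zsmul]; exact vecAddSelf v, add_zero, zero_add, smul_zero]
end
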